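/- arXiv:0908.0689 — 6 statements merged into one kernel-verified Lean document; each statement's English description precedes it below -/
import Mathlib

section
/- Let H be a finite-dimensional complex inner product space, V and W' subspaces with V ∩ W' = {0}, S = V + W', W the orthogonal complement of W' in S, and P_W the orthogonal projection onto W. Let v_1, …, v_M be a basis of V, u_i = P_W v_i, and G the M×M Gram matrix G_{ij} = ⟨u_i, u_j⟩. Then G is invertible, and the measurement vectors w_i = Σ_{j=1}^M (G⁻¹)_{ji} u_j satisfy the biorthogonality relations ⟨w_i, u_j⟩ = δ_{ij} for all i, j = 1, …, M, and each w_i lies in W. -/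
/-!
Projection onto `W` is injective on `V`: a vector of `V` orthogonal to `W` lies in
`S ⊓ Wᗮ`, which is `W'` because `S = W' ⊔ W` with `W' ⊥ W`, hence it lies in `V ⊓ W' = 0`.
So the `u_i` are linearly independent and their Gram matrix `G` is invertible; since `G⁻¹` is
Hermitian, `⟪w_i, u_k⟫ = ∑_j G⁻¹_{ij} G_{jk} = δ_{ik}`.
-/

open scoped InnerProductSpace ComplexInnerProductSpace
open Matrix

namespace Submodule

variable {𝕜 E : Type*} [RCLike 𝕜] [NormedAddCommGroup E] [InnerProductSpace 𝕜 E]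

theorem inf_orthogonal_orthogonal_inf_of_le {K S : Submodule 𝕜 E} [K.HasOrthogonalProjection]
    (h : K ≤ S) : S ⊓ (Kᗮ ⊓ S)ᗮ = K := by
  have hK : K ≤ (Kᗮ ⊓ S)ᗮ := K.le_orthogonal_orthogonal.trans (orthogonal_le inf_le_left)
  calc S ⊓ (Kᗮ ⊓ S)ᗮ = (K ⊔ Kᗮ ⊓ S) ⊓ (Kᗮ ⊓ S)ᗮ := by
        rw [sup_orthogonal_inf_of_hasOrthogonalProjection h]
    _ = K ⊔ (Kᗮ ⊓ S) ⊓ (Kᗮ ⊓ S)ᗮ := sup_inf_assoc_of_le _ hK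
    _ = K := by rw [inf_orthogonal_eq_bot, sup_bot_eq]

theorem disjoint_orthogonal_orthogonal_inf_sup {V K : Submodule 𝕜 E} [K.HasOrthogonalProjection]
    (h : Disjoint V K) : Disjoint V (Kᗮ ⊓ (V ⊔ K))ᗮ := by
  rw [disjoint_iff] at h ⊢
  calc V ⊓ (Kᗮ ⊓ (V ⊔ K))ᗮ = V ⊓ ((V ⊔ K) ⊓ (Kᗮ ⊓ (V ⊔ K))ᗮ) := by
        rw [← inf_assoc, inf_eq_left.mpr (le_sup_left : V ≤ V ⊔ K)]
    _ = ⊥ := by rw [inf_orthogonal_orthogonal_inf_of_le le_sup_right, h]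

theorem linearIndependent_starProjection_orthogonal_inf_sup {ι : Type*} {v : ι → E}
    {V K : Submodule 𝕜 E} [K.HasOrthogonalProjection] [(Kᗮ ⊓ (V ⊔ K)).HasOrthogonalProjection]
    (hli : LinearIndependent 𝕜 v) (hv : span 𝕜 (Set.range v) = V) (h : Disjoint V K) :
    LinearIndependent 𝕜 fun i ↦ (Kᗮ ⊓ (V ⊔ K)).starProjection (v i) := by
  refine hli.map (f := (Kᗮ ⊓ (V ⊔ K)).starProjection.toLinearMap) ?_
  rw [hv]
  exact (ker_starProjection (Kᗮ ⊓ (V ⊔ K))).symm ▸ disjoint_orthogonal_orthogonal_inf_sup h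

end Submodule

namespace Matrix

variable {𝕜 E ι : Type*} [RCLike 𝕜] [NormedAddCommGroup E] [InnerProductSpace 𝕜 E]
  [Fintype ι] [DecidableEq ι]

theorem inner_sum_inv_gram_smul {u : ι → E} (hu : IsUnit (gram 𝕜 u).det) (i k : ι) :
    ⟪∑ j, (gram 𝕜 u)⁻¹ j i • u j, u k⟫_𝕜 = if i = k then 1 else 0 := by
  have hinv : ∀ j, star ((gram 𝕜 u)⁻¹ j i) = (gram 𝕜 u)⁻¹ i j := fun j ↦
    congrFun (congrFun (isHermitian_gram 𝕜 u).inv i) j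
  simp_rw [sum_inner, inner_smul_left, ← RCLike.star_def, hinv, ← gram_apply (𝕜 := 𝕜),
    ← mul_apply, nonsing_inv_mul _ hu, one_apply]

end Matrix

/-- For a basis `v_1, …, v_M` of `V`, with `u_i = P_W v_i` and `G` the Gram
matrix `G i j = ⟨u_i, u_j⟩`, the matrix `G` is invertible and the measurement vectors
`w_i = ∑ j (G⁻¹) j i • u_j` satisfy `⟨w_i, u_j⟩ = δ_{ij}` and lie in `W`. -/
theorem stmt_3 {H : Type*} [NormedAddCommGroup H] [InnerProductSpace ℂ H]
    [FiniteDimensional ℂ H] (V W' : Submodule ℂ H) (hdisj : V ⊓ W' = ⊥)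
    {M : ℕ} (v : Fin M → H) (hvli : LinearIndependent ℂ v)
    (hv : Submodule.span ℂ (Set.range v) = V)
    (u : Fin M → H)
    (hu : ∀ i, u i =
      (Submodule.orthogonalProjectionOnto (W'ᗮ ⊓ (V ⊔ W') : Submodule ℂ H) (v i) : H))
    (G : Matrix (Fin M) (Fin M) ℂ) (hG : ∀ i j, G i j = ⟪u i, u j⟫)
    (w : Fin M → H) (hw : ∀ i, w i = ∑ j, G⁻¹ j i • u j) :
    IsUnit G ∧
      (∀ i j, ⟪w i, u j⟫ = if i = j then (1 : ℂ) else 0) ∧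
      (∀ i, w i ∈ (W'ᗮ ⊓ (V ⊔ W') : Submodule ℂ H)) := by
  have hu' : u = fun i ↦ (W'ᗮ ⊓ (V ⊔ W')).starProjection (v i) :=
    funext fun i ↦ by rw [hu i, Submodule.starProjection_apply]
  have huli : LinearIndependent ℂ u := hu' ▸
    Submodule.linearIndependent_starProjection_orthogonal_inf_sup hvli hv (disjoint_iff.mpr hdisj)
  have hGu : G = gram ℂ u := Matrix.ext hG
  have hdet : IsUnit G.det := hGu ▸ (det_gram_ne_zero_iff_linearIndependent.mpr huli).isUnit
  refine ⟨(isUnit_iff_isUnit_det G).mpr hdet, fun i j ↦ ?_, fun i ↦ ?_⟩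
  · rw [hw i, hGu]
    exact inner_sum_inv_gram_smul (hGu ▸ hdet) i j
  · rw [hw i]
    exact Submodule.sum_mem _ fun j _ ↦ Submodule.smul_mem _ _ (hu j ▸ Subtype.prop _)
end

section
/- Let H be a finite-dimensional complex inner product space, V and W' subspaces with V ∩ W' = {0}, S = V + W', W the orthogonal complement of W' in S, and P_W the orthogonal projection onto W. Let v_1, …, v_M be a basis of V, u_i = P_W v_i, G the (invertible) Gram matrix G_{ij} = ⟨u_i, u_j⟩, and w_i = Σ_j (G⁻¹)_{ji} u_j. Define the linear operator E on H by E x = Σ_{i=1}^M ⟨w_i, x⟩ v_i. Then: (i) E² = E (E is idempotent); (ii) E f = f for every f ∈ V; (iii) E g = 0 for every g ∈ W'. Hence E is the oblique projector onto V along W'. -/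
open scoped ComplexInnerProductSpace InnerProductSpace

/-! Since `W' ≤ V ⊔ W'`, each `v i - u i` lies in `W'`, so `u` and `v` agree modulo `W'`; as
`V ⊓ W' = ⊥`, `u` is independent and its Gram matrix `G` is invertible. The `w i` lie in `W'ᗮ`,
hence `⟪w i, v k⟫ = ⟪w i, u k⟫ = (G⁻¹ G) i k = δ i k`: the `w i` are dual to the `v i`. So `E`
fixes every `v k`, hence `V`, maps into `V`, and kills `W'`. -/

open Submodule Matrix

section OrthogonalInf

variable {𝕜 E : Type*} [RCLike 𝕜] [NormedAddCommGroup E] [InnerProductSpace 𝕜 E]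

theorem Submodule.sub_starProjection_orthogonal_inf_mem {W S : Submodule 𝕜 E}
    [W.HasOrthogonalProjection] [(Wᗮ ⊓ S).HasOrthogonalProjection] (hWS : W ≤ S)
    {x : E} (hx : x ∈ S) : x - (Wᗮ ⊓ S).starProjection x ∈ W := by
  rw [← sup_orthogonal_inf_of_hasOrthogonalProjection hWS] at hx
  obtain ⟨b, hb, a, ha, rfl⟩ := mem_sup.1 hx
  have hproj : (Wᗮ ⊓ S).starProjection (b + a) = a := by
    refine eq_starProjection_of_mem_of_inner_eq_zero ha fun y hy => ?_
    rw [add_sub_cancel_right]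
    exact inner_right_of_mem_orthogonal hb hy.1
  rwa [hproj, add_sub_cancel_right]

end OrthogonalInf

-- `u` and `v` have the same image in `M ⧸ W`, where `v` stays independent.
theorem LinearIndependent.of_forall_sub_mem {ι R M : Type*} [Ring R] [AddCommGroup M]
    [Module R M] {u v : ι → M} {W : Submodule R M} (hv : LinearIndependent R v)
    (hdisj : Disjoint (span R (Set.range v)) W) (hvu : ∀ i, v i - u i ∈ W) :
    LinearIndependent R u := by
  have hcomp : W.mkQ ∘ u = W.mkQ ∘ v :=
    funext fun i => (Submodule.Quotient.eq W).2 (by simpa using W.neg_mem (hvu i))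
  exact LinearIndependent.of_comp W.mkQ (hcomp ▸ hv.map (by simpa using hdisj))

section Biorthogonal

variable {𝕜 E ι : Type*} [RCLike 𝕜] [NormedAddCommGroup E] [InnerProductSpace 𝕜 E]
  [Fintype ι] [DecidableEq ι]

theorem inner_sum_inv_gram_smul {u : ι → E} (hu : LinearIndependent 𝕜 u) (i k : ι) :
    ⟪∑ j, (gram 𝕜 u)⁻¹ j i • u j, u k⟫_𝕜 = (1 : Matrix ι ι 𝕜) i k := by
  have hdet : IsUnit (gram 𝕜 u).det := (det_gram_ne_zero_iff_linearIndependent.2 hu).isUnit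
  have hinv : ∀ j, starRingEnd 𝕜 ((gram 𝕜 u)⁻¹ j i) = (gram 𝕜 u)⁻¹ i j := fun j =>
    congrFun (congrFun ((isHermitian_gram 𝕜 u).inv) i) j
  calc ⟪∑ j, (gram 𝕜 u)⁻¹ j i • u j, u k⟫_𝕜
      = ∑ j, (gram 𝕜 u)⁻¹ i j * gram 𝕜 u j k := by
        simp only [sum_inner, inner_smul_left, hinv, gram_apply]
    _ = ((gram 𝕜 u)⁻¹ * gram 𝕜 u) i k := (mul_apply).symm
    _ = (1 : Matrix ι ι 𝕜) i k := by rw [nonsing_inv_mul _ hdet]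

theorem sum_inner_smul_eq_self_of_mem_span {v w : ι → E}
    (hwv : ∀ i k, ⟪w i, v k⟫_𝕜 = (1 : Matrix ι ι 𝕜) i k) {f : E}
    (hf : f ∈ span 𝕜 (Set.range v)) : ∑ i, ⟪w i, f⟫_𝕜 • v i = f := by
  obtain ⟨c, rfl⟩ := (mem_span_range_iff_exists_fun 𝕜).1 hf
  simp [inner_sum, inner_smul_right, hwv, one_apply]

end Biorthogonal

/-- With a basis `v` of `V`, `u_i = P_W v_i`, Gram matrix `G`, and
measurement vectors `w_i = ∑ j (G⁻¹) j i • u_j`, the operator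
`E x = ∑ i ⟨w_i, x⟩ • v_i` is idempotent, acts as the identity on `V`, and vanishes
on `W'`; i.e. `E` is the oblique projector onto `V` along `W'`. -/
theorem stmt_4 {H : Type*} [NormedAddCommGroup H] [InnerProductSpace ℂ H]
    [FiniteDimensional ℂ H] (V W' : Submodule ℂ H) (hdisj : V ⊓ W' = ⊥)
    {M : ℕ} (v : Fin M → H) (hvli : LinearIndependent ℂ v)
    (hv : Submodule.span ℂ (Set.range v) = V)
    (u : Fin M → H)
    (hu : ∀ i, u i =
      (Submodule.orthogonalProjection (W'ᗮ ⊓ (V ⊔ W') : Submodule ℂ H) (v i) : H))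
    (G : Matrix (Fin M) (Fin M) ℂ) (hG : ∀ i j, G i j = ⟪u i, u j⟫)
    (w : Fin M → H) (hw : ∀ i, w i = ∑ j, G⁻¹ j i • u j)
    (E : H → H) (hE : ∀ x, E x = ∑ i, ⟪w i, x⟫ • v i) :
    (∀ x, E (E x) = E x) ∧
      (∀ f ∈ V, E f = f) ∧
      (∀ g ∈ W', E g = 0) := by
  have hvV : ∀ k, v k ∈ V := fun k => hv ▸ subset_span ⟨k, rfl⟩
  have hu' : ∀ i, u i = (W'ᗮ ⊓ (V ⊔ W')).starProjection (v i) := hu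
  have huW : ∀ i, u i ∈ W'ᗮ := fun i => hu' i ▸ (mem_inf.1 (starProjection_apply_mem _ (v i))).1
  have hvu : ∀ i, v i - u i ∈ W' := fun i =>
    hu' i ▸ sub_starProjection_orthogonal_inf_mem le_sup_right (mem_sup_left (hvV i))
  have huli : LinearIndependent ℂ u :=
    hvli.of_forall_sub_mem (hv ▸ disjoint_iff.2 hdisj) hvu
  have hwW : ∀ i, w i ∈ W'ᗮ := fun i =>
    hw i ▸ sum_mem fun j _ => smul_mem _ _ (huW j)
  have hwv : ∀ i k, ⟪w i, v k⟫ = (1 : Matrix (Fin M) (Fin M) ℂ) i k := fun i k => by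
    have hGu : G = gram ℂ u := Matrix.ext hG
    rw [← sub_add_cancel (v k) (u k), inner_add_right,
      inner_left_of_mem_orthogonal (hvu k) (hwW i), zero_add, hw, hGu,
      inner_sum_inv_gram_smul huli]
  have hEV : ∀ f ∈ V, E f = f := fun f hf =>
    (hE f).trans (sum_inner_smul_eq_self_of_mem_span hwv (hv ▸ hf))
  refine ⟨fun x => hEV _ ?_, hEV, fun g hg => ?_⟩
  · rw [hE]
    exact sum_mem fun i _ => smul_mem _ _ (hvV i)
  · simp [hE, inner_left_of_mem_orthogonal hg (hwW _)]
end

section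
/- (Property 1) Let H be a finite-dimensional complex inner product space, V and W' subspaces with V ∩ W' = {0}, S = V + W', W the orthogonal complement of W' in S, and P_W the orthogonal projection onto W. Let v_1, …, v_M be a basis of V, u_i = P_W v_i, G the Gram matrix G_{ij} = ⟨u_i, u_j⟩, w_i = Σ_j (G⁻¹)_{ji} u_j, and E_{V W'} x = Σ_i ⟨w_i, x⟩ v_i the oblique projector onto V along W'. Then P_W ∘ E_{V W'} = P_W as linear maps on S, i.e., P_W(E_{V W'} f) = P_W f for every f ∈ S. -/
/-!
Inside `S = V ⊔ W'` we have the orthogonal splitting `S = W' ⊕ W`, so within `S` the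
projection `P_W` vanishes exactly on `W'`. Hence `P_W` is injective on `V` and maps `S` onto
`span u`; in particular the `u i` are independent and `G` is invertible. The `w i` form the
family in `span u` biorthogonal to `u`, and since they lie in `W`,
`⟪w i, f⟫ = ⟪w i, P_W f⟫` is the `i`-th coordinate of `P_W f` in the basis `u`.
Thus `P_W (E f) = ∑ i, ⟪w i, f⟫ • u i = P_W f`.
-/

open scoped ComplexInnerProductSpace

namespace Submodule

variable {𝕜 E : Type*} [RCLike 𝕜] [NormedAddCommGroup E] [InnerProductSpace 𝕜 E]

theorem orthogonal_inf_orthogonal_inf_of_le {K S : Submodule 𝕜 E} [K.HasOrthogonalProjection]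
    (hKS : K ≤ S) : (Kᗮ ⊓ S)ᗮ ⊓ S = K := by
  refine le_antisymm ?_
    (le_inf (K.le_orthogonal_orthogonal.trans (orthogonal_le inf_le_left)) hKS)
  rintro x ⟨hxT, hxS⟩
  have hPx := K.starProjection_apply_mem x
  have hres : x - K.starProjection x ∈ (Kᗮ ⊓ S) ⊓ (Kᗮ ⊓ S)ᗮ :=
    ⟨⟨K.sub_starProjection_mem_orthogonal x, sub_mem hxS (hKS hPx)⟩,
      sub_mem hxT (orthogonal_le inf_le_left (K.le_orthogonal_orthogonal hPx))⟩
  rw [inf_orthogonal_eq_bot, mem_bot, sub_eq_zero] at hres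
  exact hres ▸ hPx

theorem disjoint_orthogonal_inf_sup_orthogonal {V W' : Submodule 𝕜 E}
    [W'.HasOrthogonalProjection] (hdisj : V ⊓ W' = ⊥) :
    Disjoint V (W'ᗮ ⊓ (V ⊔ W'))ᗮ := by
  rw [disjoint_iff, ← hdisj]
  conv_rhs => rw [← orthogonal_inf_orthogonal_inf_of_le (le_sup_right : W' ≤ V ⊔ W')]
  rw [← inf_assoc, inf_right_comm, inf_of_le_left (le_sup_left : V ≤ V ⊔ W')]

theorem map_starProjection_sup_of_le_orthogonal (K : Submodule 𝕜 E) [K.HasOrthogonalProjection]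
    (V : Submodule 𝕜 E) {W' : Submodule 𝕜 E} (hW' : W' ≤ Kᗮ) :
    (V ⊔ W').map (K.starProjection : E →ₗ[𝕜] E) =
      V.map (K.starProjection : E →ₗ[𝕜] E) := by
  rw [map_sup, (LinearMap.le_ker_iff_map (p := W')).1 (by simpa using hW'), sup_bot_eq]

end Submodule

section GramDual

open Matrix

variable {𝕜 E ι : Type*} [RCLike 𝕜] [NormedAddCommGroup E] [InnerProductSpace 𝕜 E]
  [Fintype ι] [DecidableEq ι]

local notation "⟪" x ", " y "⟫" => inner 𝕜 x y

variable (𝕜) in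
/-- The family in `span 𝕜 (range u)` biorthogonal to `u`. -/
noncomputable def gramDual (u : ι → E) (i : ι) : E :=
  ∑ j, (gram 𝕜 u)⁻¹ j i • u j

theorem gramDual_mem_span (u : ι → E) (i : ι) :
    gramDual 𝕜 u i ∈ Submodule.span 𝕜 (Set.range u) :=
  Submodule.sum_mem _ fun j _ => Submodule.smul_mem _ _ (Submodule.subset_span ⟨j, rfl⟩)

theorem inner_gramDual {u : ι → E} (hu : LinearIndependent 𝕜 u) (i k : ι) :
    ⟪gramDual 𝕜 u i, u k⟫ = (1 : Matrix ι ι 𝕜) i k := by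
  have hdet : IsUnit (gram 𝕜 u).det :=
    (det_gram_ne_zero_iff_linearIndependent.2 hu).isUnit
  rw [← nonsing_inv_mul _ hdet, mul_apply, gramDual, sum_inner]
  refine Finset.sum_congr rfl fun j _ => ?_
  rw [inner_smul_left, ← gram_apply, ← (isHermitian_gram 𝕜 u).inv.apply i j]
  rfl

theorem sum_inner_gramDual_smul {u : ι → E} (hu : LinearIndependent 𝕜 u) {y : E}
    (hy : y ∈ Submodule.span 𝕜 (Set.range u)) :
    ∑ i, ⟪gramDual 𝕜 u i, y⟫ • u i = y := by
  obtain ⟨c, rfl⟩ := (Submodule.mem_span_range_iff_exists_fun 𝕜).1 hy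
  refine Finset.sum_congr rfl fun i _ => ?_
  simp [inner_sum, inner_smul_right, inner_gramDual hu, one_apply]

end GramDual

/-- Property 1: With the oblique projector
`E_{V W'} x = ∑ i ⟨w_i, x⟩ • v_i` built from a basis `v` of `V`, `u_i = P_W v_i`, the
Gram matrix `G` and `w_i = ∑ j (G⁻¹) j i • u_j`, one has `P_W ∘ E_{V W'} = P_W` on
`S = V ⊔ W'`, i.e. `P_W (E f) = P_W f` for every `f ∈ S`. -/
theorem stmt_6 {H : Type*} [NormedAddCommGroup H] [InnerProductSpace ℂ H]
    [FiniteDimensional ℂ H] (V W' : Submodule ℂ H) (hdisj : V ⊓ W' = ⊥)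
    {M : ℕ} (v : Fin M → H) (hvli : LinearIndependent ℂ v)
    (hv : Submodule.span ℂ (Set.range v) = V)
    (u : Fin M → H)
    (hu : ∀ i, u i =
      (Submodule.orthogonalProjectionOnto (W'ᗮ ⊓ (V ⊔ W') : Submodule ℂ H) (v i) : H))
    (G : Matrix (Fin M) (Fin M) ℂ) (hG : ∀ i j, G i j = ⟪u i, u j⟫)
    (w : Fin M → H) (hw : ∀ i, w i = ∑ j, G⁻¹ j i • u j)
    (E : H → H) (hE : ∀ x, E x = ∑ i, ⟪w i, x⟫ • v i) :
    ∀ f ∈ (V ⊔ W' : Submodule ℂ H),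
      (Submodule.orthogonalProjectionOnto (W'ᗮ ⊓ (V ⊔ W') : Submodule ℂ H) (E f) : H) =
        (Submodule.orthogonalProjectionOnto (W'ᗮ ⊓ (V ⊔ W') : Submodule ℂ H) f : H) := by
  intro f hf
  set W : Submodule ℂ H := W'ᗮ ⊓ (V ⊔ W')
  have hW'W : W' ≤ Wᗮ := W'.le_orthogonal_orthogonal.trans (Submodule.orthogonal_le inf_le_left)
  have hu' : u = W.starProjection ∘ v := funext hu
  have hw' : w = gramDual ℂ u := funext fun i => by rw [hw, Matrix.ext hG]; rfl
  have huli : LinearIndependent ℂ u :=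
    hu' ▸ hvli.map (f := (W.starProjection : H →ₗ[ℂ] H))
    (by simpa [hv] using Submodule.disjoint_orthogonal_inf_sup_orthogonal hdisj)
  have hPf : W.starProjection f ∈ Submodule.span ℂ (Set.range u) := by
    rw [hu', Set.range_comp, ← ContinuousLinearMap.coe_coe, ← Submodule.map_span, hv,
      ← W.map_starProjection_sup_of_le_orthogonal V hW'W]
    exact Submodule.mem_map_of_mem hf
  have hspan : Submodule.span ℂ (Set.range u) ≤ W :=
    Submodule.span_le.2 (Set.range_subset_iff.2 fun i => hu i ▸ Submodule.coe_mem _)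
  have hwW : ∀ i, w i ∈ W := fun i => hspan (hw' ▸ gramDual_mem_span u i)
  simp only [Submodule.coe_orthogonalProjectionOnto_apply]
  calc W.starProjection (E f) = ∑ i, ⟪w i, f⟫ • u i := by simp [hE, hu']
    _ = ∑ i, ⟪w i, W.starProjection f⟫ • u i := by
      simp_rw [← Submodule.inner_starProjection_left_eq_right,
        Submodule.starProjection_eq_self_iff.2 (hwW _)]
    _ = W.starProjection f := hw' ▸ sum_inner_gramDual_smul huli hPf
end

section
/- (Property 2) Let H be a finite-dimensional complex inner product space, V and W' subspaces with V ∩ W' = {0}, S = V + W', W the orthogonal complement of W' in S, P_W the orthogonal projection onto W, and E_{V W'} the oblique projector onto V along W'. Then for every signal f ∈ S, the vector g = E_{V W'} f is the unique element of V satisfying P_W f = P_W g; that is, if g ∈ V and P_W f = P_W g, then g = E_{V W'} f. -/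
/-!
Put `S = V ⊔ W'` and `W = W'ᗮ ⊓ S`, so that `S = W' ⊕ W` orthogonally. The projection `P_W`
kills `W'`, hence `P_W (v + w') = P_W v = P_W (E (v + w'))`. Conversely, an element of `S`
orthogonal to `W` lies in `W'`; so if `g, g' ∈ V` have the same image under `P_W`, then
`g - g' ∈ V ⊓ W' = ⊥`, i.e. `P_W` is injective on `V`.
-/

namespace Submodule

variable {𝕜 E : Type*} [RCLike 𝕜] [NormedAddCommGroup E] [InnerProductSpace 𝕜 E]

theorem le_orthogonal_orthogonal_inf (W S : Submodule 𝕜 E) : W ≤ (Wᗮ ⊓ S)ᗮ :=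
  W.le_orthogonal_orthogonal.trans (orthogonal_le inf_le_left)

theorem starProjection_orthogonal_inf_eq_zero {W : Submodule 𝕜 E} (S : Submodule 𝕜 E)
    [(Wᗮ ⊓ S).HasOrthogonalProjection] {w : E} (hw : w ∈ W) :
    (Wᗮ ⊓ S).starProjection w = 0 :=
  (starProjection_apply_eq_zero_iff _).mpr (le_orthogonal_orthogonal_inf W S hw)

theorem mem_of_mem_orthogonal_orthogonal_inf {W S : Submodule 𝕜 E}
    [W.HasOrthogonalProjection] (hWS : W ≤ S) {x : E} (hxS : x ∈ S) (hx : x ∈ (Wᗮ ⊓ S)ᗮ) :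
    x ∈ W := by
  rw [← sup_orthogonal_inf_of_hasOrthogonalProjection hWS] at hxS
  obtain ⟨w, hw, k, hk, rfl⟩ := mem_sup.mp hxS
  have hk_perp : k ∈ (Wᗮ ⊓ S)ᗮ := by
    simpa using sub_mem hx (le_orthogonal_orthogonal_inf W S hw)
  have hk0 : k = 0 := by
    simpa [inf_orthogonal_eq_bot] using mem_inf.mpr ⟨hk, hk_perp⟩
  simpa [hk0] using hw

theorem injOn_starProjection_orthogonal_inf_sup {V W : Submodule 𝕜 E}
    [W.HasOrthogonalProjection] [(Wᗮ ⊓ (V ⊔ W)).HasOrthogonalProjection] (hVW : V ⊓ W = ⊥) :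
    Set.InjOn (Wᗮ ⊓ (V ⊔ W)).starProjection V := by
  intro x hx y hy hxy
  have hxy' : x - y ∈ (Wᗮ ⊓ (V ⊔ W))ᗮ := by
    rw [← starProjection_apply_eq_zero_iff, map_sub, hxy, sub_self]
  have hW : x - y ∈ W :=
    mem_of_mem_orthogonal_orthogonal_inf le_sup_right (mem_sup_left (sub_mem hx hy)) hxy'
  have : x - y ∈ V ⊓ W := mem_inf.mpr ⟨sub_mem hx hy, hW⟩
  rwa [hVW, mem_bot, sub_eq_zero] at this

end Submodule

/-- Property 2: Let `E` be the oblique projector onto `V` along `W'`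
(a linear operator acting as the identity on `V` and vanishing on `W'`). Then for every
`f ∈ S = V ⊔ W'`, `g = E f` is the unique element of `V` with `P_W f = P_W g`: it lies
in `V`, satisfies `P_W f = P_W (E f)`, and any `g ∈ V` with `P_W f = P_W g` equals `E f`. -/
theorem stmt_8 {H : Type*} [NormedAddCommGroup H] [InnerProductSpace ℂ H]
    [FiniteDimensional ℂ H] (V W' : Submodule ℂ H) (hdisj : V ⊓ W' = ⊥)
    (E : H →ₗ[ℂ] H) (hEid : ∀ x ∈ V, E x = x) (hEker : ∀ x ∈ W', E x = 0) :
    ∀ f ∈ (V ⊔ W' : Submodule ℂ H),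
      E f ∈ V ∧
      (Submodule.orthogonalProjection (W'ᗮ ⊓ (V ⊔ W') : Submodule ℂ H) f : H) =
        (Submodule.orthogonalProjection (W'ᗮ ⊓ (V ⊔ W') : Submodule ℂ H) (E f) : H) ∧
      ∀ g ∈ V,
        (Submodule.orthogonalProjection (W'ᗮ ⊓ (V ⊔ W') : Submodule ℂ H) f : H) =
          (Submodule.orthogonalProjection (W'ᗮ ⊓ (V ⊔ W') : Submodule ℂ H) g : H) →
        g = E f := by
  simp only [Submodule.coe_orthogonalProjectionOnto_apply]
  intro f hf
  obtain ⟨v, hv, w, hw, rfl⟩ := Submodule.mem_sup.mp hf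
  have hEf : E (v + w) = v := by rw [map_add, hEid v hv, hEker w hw, add_zero]
  have hPf : (W'ᗮ ⊓ (V ⊔ W')).starProjection (v + w) =
      (W'ᗮ ⊓ (V ⊔ W')).starProjection v := by
    rw [map_add, Submodule.starProjection_orthogonal_inf_eq_zero _ hw, add_zero]
  refine ⟨hEf.symm ▸ hv, by rw [hEf, hPf], fun g hg hPg => ?_⟩
  rw [hEf]
  exact Submodule.injOn_starProjection_orthogonal_inf_sup hdisj hg hv (hPg.symm.trans hPf)
end

section
/- (Backward adaptation of measurement vectors) Let H be a finite-dimensional complex inner product space, u_1, …, u_k linearly independent with W_k = span{u_1,…,u_k}, and let w_1^k, …, w_k^k ∈ W_k satisfy ⟨w_i^k, u_j⟩ = δ_{ij}. Fix an index j and let W_{k∖j} = span{u_i : i ≠ j}. Then the vectors defined by w_i^{k∖j} = w_i^k − w_j^k ⟨w_j^k, w_i^k⟩ / ‖w_j^k‖², for i ≠ j, all lie in W_{k∖j} and satisfy ⟨w_i^{k∖j}, u_m⟩ = δ_{im} for all i, m ≠ j; i.e., they are the measurement vectors for the oblique projector after removing the atom indexed by j. -/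
open scoped ComplexInnerProductSpace

/-!
Since `⟪w_j, u_i⟫ = δ_{ij}`, the functional `⟪w_j, ·⟫` reads off the `u_j`-coordinate of a vector
of `W_k`. The update is the Gram–Schmidt step making `w_i` orthogonal to `w_j`, so the updated
vector has no `u_j`-coordinate and lies in `W_{k∖j}`; and since `w_j ⟂ u_m` for `m ≠ j`, the update
does not change the pairings with those `u_m`.
-/

theorem Submodule.mem_span_image_ne_of_map_eq_zero {ι R M : Type*} [Semiring R]
    [AddCommMonoid M] [Module R M] {u : ι → M} {j : ι} (f : M →ₗ[R] R)
    (hf : ∀ i, i ≠ j → f (u i) = 0) (hfj : f (u j) = 1) {x : M}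
    (hx : x ∈ Submodule.span R (Set.range u)) (hfx : f x = 0) :
    x ∈ Submodule.span R (u '' {i | i ≠ j}) := by
  rw [← Set.insert_image_compl_eq_range u j, Submodule.mem_span_insert] at hx
  obtain ⟨a, z, hz, rfl⟩ := hx
  have hfz : f z = 0 := by
    have hker : Submodule.span R (u '' {j}ᶜ) ≤ LinearMap.ker f :=
      Submodule.span_le.mpr (Set.image_subset_iff.mpr fun i hi => hf i hi)
    exact hker hz
  have ha : a = 0 := by simpa [hfj, hfz] using hfx
  rw [ha, zero_smul, zero_add]
  exact hz

theorem inner_sub_smul_inner_div_norm_sq_eq_zero {𝕜 E : Type*} [RCLike 𝕜]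
    [NormedAddCommGroup E] [InnerProductSpace 𝕜 E] (v x : E) :
    inner 𝕜 v (x - (inner 𝕜 v x / ((‖v‖ : 𝕜) ^ 2)) • v) = 0 := by
  rcases eq_or_ne v 0 with rfl | hv
  · simp
  · have hnorm : (‖v‖ : 𝕜) ≠ 0 := by exact_mod_cast norm_ne_zero_iff.mpr hv
    rw [inner_sub_right, inner_smul_right, inner_self_eq_norm_sq_to_K]
    field_simp
    ring

theorem stmt_12_general {H : Type*} [NormedAddCommGroup H] [InnerProductSpace ℂ H]
    {k : ℕ}
    (u : Fin k → H)
    (Wk : Submodule ℂ H) (hWk : Wk = Submodule.span ℂ (Set.range u))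
    (w : Fin k → H) (hwmem : ∀ i, w i ∈ Wk)
    (hwbi : ∀ i j, ⟪w i, u j⟫ = if i = j then (1 : ℂ) else 0)
    (j : Fin k)
    (Wkj : Submodule ℂ H) (hWkj : Wkj = Submodule.span ℂ (u '' {i | i ≠ j}))
    (w' : Fin k → H)
    (hw' : ∀ i, w' i = w i - (⟪w j, w i⟫ / ((‖w j‖ : ℂ) ^ 2)) • w j) :
    (∀ i, i ≠ j → w' i ∈ Wkj) ∧
      ∀ i m, i ≠ j → m ≠ j → ⟪w' i, u m⟫ = if i = m then (1 : ℂ) else 0 := by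
  subst hWk hWkj
  refine ⟨fun i _ => ?_, fun i m _ hm => ?_⟩
  · refine Submodule.mem_span_image_ne_of_map_eq_zero (innerₛₗ ℂ (w j))
      (fun l hl => by simp [hwbi, hl.symm]) (by simp [hwbi]) ?_ ?_
    · rw [hw' i]
      exact sub_mem (hwmem i) (Submodule.smul_mem _ _ (hwmem j))
    · rw [innerₛₗ_apply_apply, hw' i]
      exact inner_sub_smul_inner_div_norm_sq_eq_zero (w j) (w i)
  · have hjm : ⟪w j, u m⟫ = 0 := by rw [hwbi j m, if_neg hm.symm]
    rw [hw' i, inner_sub_left, inner_smul_left, hjm, mul_zero, sub_zero, hwbi i m]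

/-- Backward adaptation of measurement vectors: For linearly independent
`u_1,…,u_k` spanning `W_k`, dual vectors `w_i^k ∈ W_k` with `⟨w_i^k, u_j⟩ = δ_{ij}`, a
fixed index `j`, and `W_{k∖j} = span{u_i : i ≠ j}`, the vectors
`w_i^{k∖j} = w_i^k − (⟨w_j^k, w_i^k⟩/‖w_j^k‖²) • w_j^k` (for `i ≠ j`) all lie in
`W_{k∖j}` and satisfy `⟨w_i^{k∖j}, u_m⟩ = δ_{im}` for all `i, m ≠ j`. -/
theorem stmt_12 {H : Type*} [NormedAddCommGroup H] [InnerProductSpace ℂ H]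
    [FiniteDimensional ℂ H] {k : ℕ}
    (u : Fin k → H) (huli : LinearIndependent ℂ u)
    (Wk : Submodule ℂ H) (hWk : Wk = Submodule.span ℂ (Set.range u))
    (w : Fin k → H) (hwmem : ∀ i, w i ∈ Wk)
    (hwbi : ∀ i j, ⟪w i, u j⟫ = if i = j then (1 : ℂ) else 0)
    (j : Fin k)
    (Wkj : Submodule ℂ H) (hWkj : Wkj = Submodule.span ℂ (u '' {i | i ≠ j}))
    (w' : Fin k → H)
    (hw' : ∀ i, w' i = w i - (⟪w j, w i⟫ / ((‖w j‖ : ℂ) ^ 2)) • w j) :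
    (∀ i, i ≠ j → w' i ∈ Wkj) ∧
      ∀ i m, i ≠ j → m ≠ j → ⟪w' i, u m⟫ = if i = m then (1 : ℂ) else 0 :=
  stmt_12_general u Wk hWk w hwmem hwbi j Wkj hWkj w' hw'
end

section
/- (Proposition 1) Let H be a finite-dimensional complex inner product space, W a subspace, and {u_n : n ∈ J} ⊆ W a finite family of vectors. Let J_k ⊆ J be a set of already selected indices with W_k = span{u_ℓ : ℓ ∈ J_k}, and for each n ∈ J ∖ J_k set γ_n = u_n − P_{W_k} u_n and W_{k+1}(n) = W_k + span{u_n}. Then for any signal f ∈ H, an index ℓ_{k+1} ∈ J ∖ J_k with γ_{ℓ_{k+1}} ≠ 0 minimizes ‖P_W f − P_{W_{k+1}(n)} f‖² over all n ∈ J ∖ J_k with γ_n ≠ 0 if and only if it maximizes |⟨γ_n, f⟩| / ‖γ_n‖ over the same set of indices. -/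
/-!
Since `γ_n = u_n − P_{W_k} u_n` is orthogonal to `W_k` and `W_k + span{u_n} = W_k + span{γ_n}`,
the projection onto `W_{k+1}(n)` is `P_{W_k} f + (⟪γ_n, f⟫ / ‖γ_n‖²) γ_n`. As `W_{k+1}(n) ≤ W`,
Pythagoras gives `‖P_W f − P_{W_{k+1}(n)} f‖² = ‖P_W f − P_{W_k} f‖² − (|⟪γ_n, f⟫| / ‖γ_n‖)²`,
whose first term does not depend on `n`.
-/

open scoped ComplexInnerProductSpace

namespace Submodule

theorem sup_span_singleton_sub_of_mem {R M : Type*} [Ring R] [AddCommGroup M] [Module R M]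
    {K : Submodule R M} {u k : M} (hk : k ∈ K) : K ⊔ R ∙ (u - k) = K ⊔ R ∙ u := by
  refine le_antisymm (sup_le le_sup_left ?_) (sup_le le_sup_left ?_) <;>
    rw [span_singleton_le_iff_mem]
  · exact sub_mem (mem_sup_right (mem_span_singleton_self u)) (mem_sup_left hk)
  · simpa using add_mem (mem_sup_right (mem_span_singleton_self (u - k))) (mem_sup_left hk)

variable {𝕜 E : Type*} [RCLike 𝕜] [NormedAddCommGroup E] [InnerProductSpace 𝕜 E]

theorem starProjection_sup_of_isOrtho {U V : Submodule 𝕜 E} [U.HasOrthogonalProjection]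
    [V.HasOrthogonalProjection] [(U ⊔ V).HasOrthogonalProjection] (h : U ⟂ V) (x : E) :
    (U ⊔ V).starProjection x = U.starProjection x + V.starProjection x := by
  refine eq_starProjection_of_mem_orthogonal
    (add_mem_sup (U.starProjection_apply_mem x) (V.starProjection_apply_mem x)) ?_
  rw [← inf_orthogonal]
  constructor
  · rw [← sub_sub]
    exact sub_mem (sub_starProjection_mem_orthogonal x) (h.ge (V.starProjection_apply_mem x))
  · rw [sub_add_eq_sub_sub_swap]
    exact sub_mem (sub_starProjection_mem_orthogonal x) (h.le (U.starProjection_apply_mem x))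

theorem norm_starProjection_singleton (v x : E) :
    ‖(𝕜 ∙ v).starProjection x‖ = ‖inner 𝕜 v x‖ / ‖v‖ := by
  rcases eq_or_ne v 0 with rfl | hv
  · simp
  rw [starProjection_singleton, norm_smul, norm_div, RCLike.norm_ofReal,
    abs_of_nonneg (by positivity)]
  field_simp [norm_ne_zero_iff.2 hv]

theorem norm_starProjection_sub_sq_of_le {L W : Submodule 𝕜 E} [L.HasOrthogonalProjection]
    [W.HasOrthogonalProjection] (hLW : L ≤ W) {y : E} (hy : y ∈ L) (x : E) :
    ‖W.starProjection x - y‖ ^ 2 =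
      ‖W.starProjection x - L.starProjection x‖ ^ 2 + ‖L.starProjection x - y‖ ^ 2 := by
  have hperp : W.starProjection x - L.starProjection x ∈ Lᗮ := by
    rw [← sub_sub_sub_cancel_left _ _ x]
    exact sub_mem (sub_starProjection_mem_orthogonal x)
      (orthogonal_le hLW (sub_starProjection_mem_orthogonal x))
  rw [← sub_add_sub_cancel _ (L.starProjection x) y]
  simpa only [sq] using norm_add_sq_eq_norm_sq_add_norm_sq_of_inner_eq_zero _ _
    (inner_left_of_mem_orthogonal (sub_mem (L.starProjection_apply_mem x) hy) hperp)

theorem norm_sub_starProjection_sup_span_singleton_sq {K W : Submodule 𝕜 E}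
    [K.HasOrthogonalProjection] [W.HasOrthogonalProjection] {u : E}
    [(K ⊔ 𝕜 ∙ u).HasOrthogonalProjection] (hKW : K ≤ W) (hu : u ∈ W) (x : E) :
    ‖W.starProjection x - (K ⊔ 𝕜 ∙ u).starProjection x‖ ^ 2 =
      ‖W.starProjection x - K.starProjection x‖ ^ 2 -
        (‖inner 𝕜 (u - K.starProjection u) x‖ / ‖u - K.starProjection u‖) ^ 2 := by
  set γ := u - K.starProjection u
  have hsup : K ⊔ 𝕜 ∙ γ = K ⊔ 𝕜 ∙ u := sup_span_singleton_sub_of_mem (K.starProjection_apply_mem u)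
  have : (K ⊔ 𝕜 ∙ γ).HasOrthogonalProjection := hsup ▸ inferInstance
  have hortho : K ⟂ 𝕜 ∙ γ :=
    isOrtho_comm.1 ((span_singleton_le_iff_mem _ _).2 (sub_starProjection_mem_orthogonal u))
  have hproj : (K ⊔ 𝕜 ∙ u).starProjection x = K.starProjection x + (𝕜 ∙ γ).starProjection x := by
    simpa only [hsup] using starProjection_sup_of_isOrtho hortho x
  have hpyth := norm_starProjection_sub_sq_of_le
    (sup_le hKW ((span_singleton_le_iff_mem _ _).2 hu)) (mem_sup_left (K.starProjection_apply_mem x)) x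
  rw [hproj] at hpyth ⊢
  rw [add_sub_cancel_left, norm_starProjection_singleton] at hpyth
  linarith

end Submodule

theorem stmt_16_general {H : Type*} [NormedAddCommGroup H] [InnerProductSpace ℂ H]
    [FiniteDimensional ℂ H] (W : Submodule ℂ H)
    {ι : Type*} [DecidableEq ι] (J : Finset ι) (u : ι → H) (huW : ∀ n ∈ J, u n ∈ W)
    (Jk : Finset ι) (hJk : Jk ⊆ J)
    (Wk : Submodule ℂ H) (hWk : Wk = Submodule.span ℂ (u '' ↑Jk))
    (γ : ι → H) (hγ : ∀ n, γ n = u n - (Submodule.orthogonalProjectionOnto Wk (u n) : H))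
    (Wk1 : ι → Submodule ℂ H) (hWk1 : ∀ n, Wk1 n = Wk ⊔ Submodule.span ℂ {u n})
    (f : H) (ℓ : ι) (hℓ : ℓ ∈ J \ Jk) :
    ((∀ n ∈ J \ Jk, γ n ≠ 0 →
        ‖(Submodule.orthogonalProjectionOnto W f : H) - (Submodule.orthogonalProjectionOnto (Wk1 ℓ) f : H)‖ ^ 2 ≤
          ‖(Submodule.orthogonalProjectionOnto W f : H) - (Submodule.orthogonalProjectionOnto (Wk1 n) f : H)‖ ^ 2) ↔
      (∀ n ∈ J \ Jk, γ n ≠ 0 →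
        ‖⟪γ n, f⟫‖ / ‖γ n‖ ≤ ‖⟪γ ℓ, f⟫‖ / ‖γ ℓ‖)) := by
  have hWkW : Wk ≤ W := by
    rw [hWk, Submodule.span_le]
    rintro _ ⟨m, hm, rfl⟩
    exact huW m (hJk hm)
  have hdist : ∀ n ∈ J \ Jk,
      ‖(Submodule.orthogonalProjectionOnto W f : H) -
          (Submodule.orthogonalProjectionOnto (Wk1 n) f : H)‖ ^ 2 =
        ‖W.starProjection f - Wk.starProjection f‖ ^ 2 - (‖⟪γ n, f⟫‖ / ‖γ n‖) ^ 2 := by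
    intro n hn
    simp only [hWk1 n, hγ n, ← Submodule.starProjection_apply]
    exact Submodule.norm_sub_starProjection_sup_span_singleton_sq hWkW
      (huW n (Finset.mem_sdiff.1 hn).1) f
  refine forall₂_congr fun n hn => imp_congr_right fun _ => ?_
  rw [hdist n hn, hdist ℓ hℓ, sub_le_sub_iff_left,
    pow_le_pow_iff_left₀ (by positivity) (by positivity) two_ne_zero]

/-- Proposition 1: With `W` a subspace, a finite family of atoms
`u_n ∈ W` (`n ∈ J`), already selected indices `J_k ⊆ J` determining
`W_k = span{u_ℓ : ℓ ∈ J_k}`, residuals `γ_n = u_n − P_{W_k} u_n`, and enlarged spaces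
`W_{k+1}(n) = W_k + span{u_n}`: for a signal `f`, an index `ℓ ∈ J ∖ J_k` with
`γ_ℓ ≠ 0` minimizes `‖P_W f − P_{W_{k+1}(n)} f‖²` over all `n ∈ J ∖ J_k` with
`γ_n ≠ 0` if and only if it maximizes `|⟨γ_n, f⟩|/‖γ_n‖` over the same set. -/
theorem stmt_16 {H : Type*} [NormedAddCommGroup H] [InnerProductSpace ℂ H]
    [FiniteDimensional ℂ H] (W : Submodule ℂ H)
    {ι : Type*} [DecidableEq ι] (J : Finset ι) (u : ι → H) (huW : ∀ n ∈ J, u n ∈ W)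
    (Jk : Finset ι) (hJk : Jk ⊆ J)
    (Wk : Submodule ℂ H) (hWk : Wk = Submodule.span ℂ (u '' ↑Jk))
    (γ : ι → H) (hγ : ∀ n, γ n = u n - (Submodule.orthogonalProjectionOnto Wk (u n) : H))
    (Wk1 : ι → Submodule ℂ H) (hWk1 : ∀ n, Wk1 n = Wk ⊔ Submodule.span ℂ {u n})
    (f : H) (ℓ : ι) (hℓ : ℓ ∈ J \ Jk) (hγℓ : γ ℓ ≠ 0) :
    ((∀ n ∈ J \ Jk, γ n ≠ 0 →
        ‖(Submodule.orthogonalProjectionOnto W f : H) - (Submodule.orthogonalProjectionOnto (Wk1 ℓ) f : H)‖ ^ 2 ≤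
          ‖(Submodule.orthogonalProjectionOnto W f : H) - (Submodule.orthogonalProjectionOnto (Wk1 n) f : H)‖ ^ 2) ↔
      (∀ n ∈ J \ Jk, γ n ≠ 0 →
        ‖⟪γ n, f⟫‖ / ‖γ n‖ ≤ ‖⟪γ ℓ, f⟫‖ / ‖γ ℓ‖)) :=
  stmt_16_general W J u huW Jk hJk Wk hWk γ hγ Wk1 hWk1 f ℓ hℓ
end
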